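/- Let X be a nonzero real Banach space and suppose there exists a continuous linear operator A : X → X* which is symmetric (⟨Ax, y⟩ = ⟨x, Ay⟩ for all x, y ∈ X), satisfies ⟨Ax, x⟩ ≥ 0 for all x ∈ X, and is invertible with continuous inverse. Then the bilinear form M(x, y) := ⟨Ax, y⟩ is an inner product on X (symmetric, bilinear, and positive definite), and the norm it induces is equivalent to the original norm of X: ‖A⁻¹‖⁻¹·‖x‖² ≤ M(x, x) ≤ ‖A‖·‖x‖² for all x ∈ X. In particular, X is isomorphic to a real Hilbert space. -/

import Mathlib

/-!
Cauchy–Schwarz for the positive semidefinite form `⟨Ax, y⟩` gives, for `f = Ay`,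
`f(x)² ≤ ⟨Ax, x⟩⟨Ay, y⟩ = ⟨Ax, x⟩ f(A⁻¹f) ≤ ‖A⁻¹‖ ⟨Ax, x⟩ ‖f‖²`. Since `A` is onto, this holds for
every functional `f`, and Hahn–Banach turns it into `‖x‖² ≤ ‖A⁻¹‖ ⟨Ax, x⟩`. So the form is
definite, and its norm is equivalent to the original one; `X` renormed by it is therefore a
complete inner product space, isomorphic to `X`.
-/

theorem Real.le_sqrt_mul_of_sq_le_mul_sq {a b C : ℝ} (hb : 0 ≤ b) (h : a ^ 2 ≤ C * b ^ 2) :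
    a ≤ √C * b :=
  calc a ≤ √(C * b ^ 2) := Real.le_sqrt_of_sq_le h
    _ = √C * b := by rw [Real.sqrt_mul' C (sq_nonneg b), Real.sqrt_sq hb]

variable {X : Type*} [NormedAddCommGroup X] [NormedSpace ℝ X]

theorem NormedSpace.norm_sq_le_of_forall_dual_sq_le (x : X) {M : ℝ} (hM : 0 ≤ M)
    (h : ∀ f : StrongDual ℝ X, f x ^ 2 ≤ M * ‖f‖ ^ 2) : ‖x‖ ^ 2 ≤ M := by
  have hx : ‖x‖ ≤ √M := by
    refine NormedSpace.norm_le_dual_bound ℝ x (Real.sqrt_nonneg M) fun f => ?_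
    refine Real.le_sqrt_mul_of_sq_le_mul_sq (norm_nonneg f) ?_
    rw [Real.norm_eq_abs, sq_abs]
    exact h f
  exact (Real.le_sqrt (norm_nonneg x) hM).mp hx

namespace ContinuousLinearMap

variable (A : X →L[ℝ] StrongDual ℝ X)

theorem apply_self_le_opNorm_mul_sq (x : X) : A x x ≤ ‖A‖ * ‖x‖ ^ 2 :=
  calc A x x ≤ ‖A x x‖ := le_abs_self _
    _ ≤ ‖A‖ * ‖x‖ * ‖x‖ := A.le_opNorm₂ x x
    _ = ‖A‖ * ‖x‖ ^ 2 := by ring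

theorem sq_apply_le_apply_self_mul_apply_self (hsym : ∀ x y, A x y = A y x)
    (hpos : ∀ x, 0 ≤ A x x) (x y : X) : A x y ^ 2 ≤ A x x * A y y := by
  simpa [sq, ← hsym y x] using
    LinearMap.BilinForm.apply_mul_apply_le_of_forall_zero_le A.toLinearMap₁₂ hpos x y

end ContinuousLinearMap

namespace ContinuousLinearEquiv

variable (A : X ≃L[ℝ] StrongDual ℝ X) (hsym : ∀ x y, A x y = A y x) (hpos : ∀ x, 0 ≤ A x x)
include hsym hpos

theorem norm_sq_le_opNorm_symm_mul_apply_self (x : X) :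
    ‖x‖ ^ 2 ≤ ‖(A.symm : StrongDual ℝ X →L[ℝ] X)‖ * A x x := by
  refine NormedSpace.norm_sq_le_of_forall_dual_sq_le x
    (mul_nonneg (ContinuousLinearMap.opNorm_nonneg _) (hpos x)) fun f => ?_
  set s := ‖(A.symm : StrongDual ℝ X →L[ℝ] X)‖
  set y := A.symm f
  have hfy : f = A y := (A.apply_symm_apply f).symm
  have hy : A y y ≤ s * ‖f‖ ^ 2 :=
    calc A y y = f y := by rw [← hfy]
      _ ≤ ‖f‖ * ‖y‖ := (le_abs_self _).trans (f.le_opNorm y)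
      _ ≤ ‖f‖ * (s * ‖f‖) := by gcongr; exact (A.symm : StrongDual ℝ X →L[ℝ] X).le_opNorm f
      _ = s * ‖f‖ ^ 2 := by ring
  calc f x ^ 2 = A x y ^ 2 := by rw [hfy, hsym]
    _ ≤ A x x * A y y :=
      (A : X →L[ℝ] StrongDual ℝ X).sq_apply_le_apply_self_mul_apply_self hsym hpos x y
    _ ≤ A x x * (s * ‖f‖ ^ 2) := mul_le_mul_of_nonneg_left hy (hpos x)
    _ = s * A x x * ‖f‖ ^ 2 := by ring

theorem eq_zero_of_apply_self_eq_zero {x : X} (hx : A x x = 0) : x = 0 := by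
  simpa [hx] using A.norm_sq_le_opNorm_symm_mul_apply_self hsym hpos x

theorem apply_self_pos {x : X} (hx : x ≠ 0) : 0 < A x x :=
  (hpos x).lt_of_ne' (mt (A.eq_zero_of_apply_self_eq_zero hsym hpos) hx)

theorem inv_opNorm_symm_mul_sq_le_apply_self (x : X) :
    ‖(A.symm : StrongDual ℝ X →L[ℝ] X)‖⁻¹ * ‖x‖ ^ 2 ≤ A x x := by
  rcases (ContinuousLinearMap.opNorm_nonneg (A.symm : StrongDual ℝ X →L[ℝ] X)).eq_or_lt
    with hs | hs
  · rw [← hs, inv_zero, zero_mul]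
    exact hpos x
  · exact (inv_mul_le_iff₀ hs).mpr (A.norm_sq_le_opNorm_symm_mul_apply_self hsym hpos x)

noncomputable abbrev innerProductSpaceCore : InnerProductSpace.Core ℝ X where
  inner x y := A x y
  conj_inner_symm x y := hsym y x
  re_inner_nonneg := hpos
  add_left x y z := by simp
  smul_left x y r := by simp
  definite _ := A.eq_zero_of_apply_self_eq_zero hsym hpos

end ContinuousLinearEquiv

def Renormed (X : Type*) : Type _ := X

instance {X : Type*} [i : AddCommGroup X] : AddCommGroup (Renormed X) := i
instance {X : Type*} [AddCommGroup X] [i : Module ℝ X] : Module ℝ (Renormed X) := i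

theorem exists_continuousLinearEquiv_innerProductSpace_of_core {X : Type u}
    [NormedAddCommGroup X] [NormedSpace ℝ X] [CompleteSpace X] (c : InnerProductSpace.Core ℝ X)
    {C D : ℝ} (hup : ∀ x, c.inner x x ≤ C * ‖x‖ ^ 2) (hlow : ∀ x, ‖x‖ ^ 2 ≤ D * c.inner x x) :
    ∃ (H : Type u) (_ : NormedAddCommGroup H) (_ : InnerProductSpace ℝ H)
      (_ : CompleteSpace H), Nonempty (X ≃L[ℝ] H) := by
  let _ : NormedAddCommGroup (Renormed X) := c.toNormedAddCommGroup
  let _ : InnerProductSpace ℝ (Renormed X) := InnerProductSpace.ofCore c.toCore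
  let e : X ≃ₗ[ℝ] Renormed X := LinearEquiv.refl ℝ X
  have hnorm (x : X) : ‖e x‖ ^ 2 = c.inner x x := (real_inner_self_eq_norm_sq (e x)).symm
  let e' : X ≃L[ℝ] Renormed X := e.toContinuousLinearEquivOfBounds √C √D
    (fun x => Real.le_sqrt_mul_of_sq_le_mul_sq (norm_nonneg x) ((hnorm x).trans_le (hup x)))
    (fun y => Real.le_sqrt_mul_of_sq_le_mul_sq (norm_nonneg y) ((hlow (e.symm y)).trans_eq
      (by rw [← hnorm]; rfl)))
  have : CompleteSpace (Renormed X) :=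
    (e'.isUniformEmbedding.isUniformInducing.completeSpace_congr e'.surjective).mp ‹_›
  exact ⟨Renormed X, _, _, this, ⟨e'⟩⟩

theorem stmt7_general {X : Type u} [NormedAddCommGroup X] [NormedSpace ℝ X]
    [CompleteSpace X]
    (A : X ≃L[ℝ] StrongDual ℝ X)
    (hsym : ∀ x y : X, A x y = A y x)
    (hpos : ∀ x : X, 0 ≤ A x x) :
    (∀ x y : X, A x y = A y x) ∧
    (∀ (a b : ℝ) (x y z : X), A (a • x + b • y) z = a * A x z + b * A y z) ∧
    (∀ (a b : ℝ) (x y z : X), A x (a • y + b • z) = a * A x y + b * A x z) ∧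
    (∀ x : X, x ≠ 0 → 0 < A x x) ∧
    (∀ x : X, ‖(A.symm : StrongDual ℝ X →L[ℝ] X)‖⁻¹ * ‖x‖ ^ 2 ≤ A x x ∧
      A x x ≤ ‖(A : X →L[ℝ] StrongDual ℝ X)‖ * ‖x‖ ^ 2) ∧
    ∃ (H : Type u) (_ : NormedAddCommGroup H) (_ : InnerProductSpace ℝ H)
      (_ : CompleteSpace H), Nonempty (X ≃L[ℝ] H) := by
  have hup := (A : X →L[ℝ] StrongDual ℝ X).apply_self_le_opNorm_mul_sq
  refine ⟨hsym, fun a b x y z => by simp, fun a b x y z => by simp,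
    fun _ => A.apply_self_pos hsym hpos,
    fun x => ⟨A.inv_opNorm_symm_mul_sq_le_apply_self hsym hpos x, hup x⟩, ?_⟩
  exact exists_continuousLinearEquiv_innerProductSpace_of_core
    (A.innerProductSpaceCore hsym hpos) hup (A.norm_sq_le_opNorm_symm_mul_apply_self hsym hpos)

/-- If a nonzero real Banach space `X` admits a continuous linear operator `A : X → X*`
which is symmetric, positive semidefinite and invertible with continuous inverse, then
`M(x, y) := ⟪Ax, y⟫` is an inner product on `X` (symmetric, bilinear and positive
definite), its induced norm is equivalent to the original norm:
`‖A⁻¹‖⁻¹·‖x‖² ≤ M(x,x) ≤ ‖A‖·‖x‖²`, and, in particular, `X` is isomorphic to a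
real Hilbert space. -/
theorem stmt7 {X : Type u} [NormedAddCommGroup X] [NormedSpace ℝ X]
    [CompleteSpace X] [Nontrivial X]
    (A : X ≃L[ℝ] StrongDual ℝ X)
    (hsym : ∀ x y : X, A x y = A y x)
    (hpos : ∀ x : X, 0 ≤ A x x) :
    (∀ x y : X, A x y = A y x) ∧
    (∀ (a b : ℝ) (x y z : X), A (a • x + b • y) z = a * A x z + b * A y z) ∧
    (∀ (a b : ℝ) (x y z : X), A x (a • y + b • z) = a * A x y + b * A x z) ∧
    (∀ x : X, x ≠ 0 → 0 < A x x) ∧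
    (∀ x : X, ‖(A.symm : StrongDual ℝ X →L[ℝ] X)‖⁻¹ * ‖x‖ ^ 2 ≤ A x x ∧
      A x x ≤ ‖(A : X →L[ℝ] StrongDual ℝ X)‖ * ‖x‖ ^ 2) ∧
    ∃ (H : Type u) (_ : NormedAddCommGroup H) (_ : InnerProductSpace ℝ H)
      (_ : CompleteSpace H), Nonempty (X ≃L[ℝ] H) :=
  stmt7_general A hsym hpos
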